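/- arXiv:1110.4653 — 7 statements merged into one kernel-verified Lean document; each statement's English description precedes it below -/
import Mathlib

section
/- Let ξ₀, ξ₁ ∈ ℝ satisfy ξ₀ > −1, ξ₁ > −1 and (ξ₀+1)(ξ₁+1) > 1. Then for every λ > 0 one has ξ₀ξ₁ + (ξ₀+ξ₁)·√λ·coth(√λ) + λ ≥ (ξ₀+1)(ξ₁+1) − 1 > 0; in particular the left-hand side is strictly positive. -/
noncomputable def coth (s : ℝ) : ℝ := Real.cosh s / Real.sinh s

/-!
Put `s = √λ` and `t = s coth s`, so the determinant function is `ξ₀ξ₁ + (ξ₀ + ξ₁) t + s²`.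
Comparing derivatives gives `1 ≤ t ≤ 1 + s²/2`. Hence `(ξ₀ + ξ₁)(t - 1) ≥ 0` when `ξ₀ + ξ₁ ≥ 0`,
and otherwise `(ξ₀ + ξ₁)(t - 1) ≥ -2 (t - 1) ≥ -s²` since `ξ₀ + ξ₁ > -2`; either way the function
is at least `ξ₀ξ₁ + ξ₀ + ξ₁ = (ξ₀ + 1)(ξ₁ + 1) - 1`.
-/

open Real Set

lemma nonneg_of_hasDerivAt_of_nonneg {f f' : ℝ → ℝ} (hf : ∀ x, HasDerivAt f (f' x) x)
    (hf0 : 0 ≤ f 0) (hf' : ∀ x, 0 ≤ x → 0 ≤ f' x) {s : ℝ} (hs : 0 ≤ s) : 0 ≤ f s := by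
  have hmono : MonotoneOn f (Ici 0) :=
    monotoneOn_of_hasDerivWithinAt_nonneg (convex_Ici 0)
      (fun x _ => (hf x).continuousAt.continuousWithinAt)
      (fun x _ => (hf x).hasDerivWithinAt)
      (fun x hx => hf' x (interior_subset hx))
  exact hf0.trans (hmono self_mem_Ici hs hs)

lemma sinh_le_mul_cosh {s : ℝ} (hs : 0 ≤ s) : sinh s ≤ s * cosh s := by
  have hderiv (x : ℝ) : HasDerivAt (fun x => x * cosh x - sinh x) (x * sinh x) x := by
    refine (((hasDerivAt_id x).mul (hasDerivAt_cosh x)).sub (hasDerivAt_sinh x)).congr_deriv ?_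
    simp only [id, one_mul, add_sub_cancel_left]
  have := nonneg_of_hasDerivAt_of_nonneg hderiv (by simp)
    (fun x hx => mul_nonneg hx (sinh_nonneg_iff.mpr hx)) hs
  linarith

lemma mul_cosh_le_sinh {s : ℝ} (hs : 0 ≤ s) : s * cosh s ≤ (1 + s ^ 2 / 2) * sinh s := by
  have hderiv (x : ℝ) : HasDerivAt (fun x => (1 + x ^ 2 / 2) * sinh x - x * cosh x)
      (x ^ 2 / 2 * cosh x) x := by
    have hpoly : HasDerivAt (fun x : ℝ => 1 + x ^ 2 / 2) x x := by
      refine (((hasDerivAt_pow 2 x).div_const 2).const_add 1).congr_deriv ?_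
      ring
    refine ((hpoly.mul (hasDerivAt_sinh x)).sub
      ((hasDerivAt_id x).mul (hasDerivAt_cosh x))).congr_deriv ?_
    simp only [id, one_mul]
    ring
  have := nonneg_of_hasDerivAt_of_nonneg hderiv (by simp) (fun x _ => by positivity) hs
  linarith

lemma one_le_mul_coth {s : ℝ} (hs : 0 < s) : 1 ≤ s * coth s := by
  rw [coth, mul_div_assoc', le_div_iff₀ (sinh_pos_iff.mpr hs), one_mul]
  exact sinh_le_mul_cosh hs.le

lemma mul_coth_le {s : ℝ} (hs : 0 < s) : s * coth s ≤ 1 + s ^ 2 / 2 := by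
  rw [coth, mul_div_assoc', div_le_iff₀ (sinh_pos_iff.mpr hs)]
  exact mul_cosh_le_sinh hs.le

lemma le_mul_add_sq {c t s : ℝ} (hc : -2 ≤ c) (ht₁ : 1 ≤ t) (ht₂ : t ≤ 1 + s ^ 2 / 2) :
    c ≤ c * t + s ^ 2 := by
  nlinarith [mul_nonneg (neg_le_iff_add_nonneg.mp hc) (sub_nonneg.mpr ht₁)]

/-- If `ξ₀ > -1`, `ξ₁ > -1` and `(ξ₀+1)(ξ₁+1) > 1`, then for every `λ > 0` the
eigenvalue determinant function `ξ₀ξ₁ + (ξ₀+ξ₁)·√λ·coth(√λ) + λ` is bounded below by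
`(ξ₀+1)(ξ₁+1) − 1 > 0`, and in particular it is strictly positive. -/
theorem stmt0 (ξ₀ ξ₁ : ℝ) (h₀ : ξ₀ > -1) (h₁ : ξ₁ > -1)
    (hprod : (ξ₀ + 1) * (ξ₁ + 1) > 1) :
    ∀ l : ℝ, l > 0 →
      (ξ₀ + 1) * (ξ₁ + 1) - 1
          ≤ ξ₀ * ξ₁ + (ξ₀ + ξ₁) * Real.sqrt l * coth (Real.sqrt l) + l
        ∧ (ξ₀ + 1) * (ξ₁ + 1) - 1 > 0
        ∧ 0 < ξ₀ * ξ₁ + (ξ₀ + ξ₁) * Real.sqrt l * coth (Real.sqrt l) + l := by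
  intro l hl
  set s := √l
  have hs : 0 < s := sqrt_pos.mpr hl
  have hsl : s ^ 2 = l := sq_sqrt hl.le
  have hbound : ξ₀ + ξ₁ ≤ (ξ₀ + ξ₁) * (s * coth s) + s ^ 2 :=
    le_mul_add_sq (by linarith) (one_le_mul_coth hs) (mul_coth_le hs)
  have hlower : (ξ₀ + 1) * (ξ₁ + 1) - 1 ≤ ξ₀ * ξ₁ + (ξ₀ + ξ₁) * s * coth s + l := by
    rw [← hsl, mul_assoc (ξ₀ + ξ₁)]
    linarith
  exact ⟨hlower, by linarith, by linarith⟩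
end

section
/- Let ξ₀, ξ₁ ∈ ℝ satisfy (ξ₀+1)(ξ₁+1) < 1. Then there exists λ > 0 such that ξ₀ξ₁ + (ξ₀+ξ₁)·√λ·coth(√λ) + λ = 0. -/
/-!
Substituting `λ = s²`, the function becomes `g(s) = ξ₀ξ₁ + (ξ₀+ξ₁)·s·coth s + s²` on `s > 0`.
Since `s·coth s → 1` as `s → 0⁺`, `g` tends to `(ξ₀+1)(ξ₁+1) − 1 < 0` there, while `coth s → 1`
as `s → ∞` makes `g` grow like `s²`. The intermediate value theorem on the connected set `(0, ∞)`
then gives a zero.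
-/

open Filter Set Topology

lemma continuousOn_coth : ContinuousOn coth {0}ᶜ :=
  Real.continuous_cosh.continuousOn.div Real.continuous_sinh.continuousOn
    fun _ hs => Real.sinh_ne_zero.2 hs

lemma tendsto_mul_coth_nhdsGT_zero : Tendsto (fun s => s * coth s) (𝓝[>] 0) (𝓝 1) := by
  have hslope : Tendsto (fun s => s⁻¹ * Real.sinh s) (𝓝[>] 0) (𝓝 1) := by
    simpa using (Real.hasDerivAt_sinh 0).tendsto_slope_zero_right
  have hcosh : Tendsto Real.cosh (𝓝[>] 0) (𝓝 1) := by
    simpa using Real.continuous_cosh.continuousWithinAt.tendsto (x := 0) (s := Ioi 0)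
  have hprod : Tendsto (fun s => Real.cosh s * (s⁻¹ * Real.sinh s)⁻¹) (𝓝[>] 0) (𝓝 1) := by
    simpa using hcosh.mul (hslope.inv₀ one_ne_zero)
  refine hprod.congr fun s => ?_
  simp only [coth, mul_inv, inv_inv]
  ring

lemma tendsto_coth_atTop : Tendsto coth atTop (𝓝 1) := by
  -- `coth s - 1 = e⁻ˢ / sinh s`
  have hdiff : Tendsto (fun s => Real.exp (-s) / Real.sinh s) atTop (𝓝 0) :=
    Real.tendsto_exp_neg_atTop_nhds_zero.div_atTop <| tendsto_atTop_mono'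
      _ ((eventually_ge_atTop 0).mono fun _ => Real.self_le_sinh_iff.2) tendsto_id
  refine (add_zero (1 : ℝ) ▸ hdiff.const_add 1).congr' ?_
  filter_upwards [eventually_gt_atTop 0] with s hs
  have hsinh : Real.sinh s ≠ 0 := (Real.sinh_pos_iff.2 hs).ne'
  rw [coth, ← Real.cosh_sub_sinh]
  field_simp
  ring

lemma exists_pos_add_mul_mul_coth_add_sq_eq_zero (a c : ℝ) (h : c + a < 0) :
    ∃ s > 0, c + a * s * coth s + s ^ 2 = 0 := by
  set g : ℝ → ℝ := fun s => c + a * (s * coth s) + s ^ 2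
  have hcont : ContinuousOn g (Ioi 0) := by
    refine (continuousOn_const.add (continuousOn_const.mul
      (continuousOn_id.mul (continuousOn_coth.mono ?_)))).add (continuousOn_id.pow 2)
    exact fun s (hs : 0 < s) => hs.ne'
  have hzero : Tendsto g (𝓝[>] 0) (𝓝 (c + a)) := by
    have hsq : Tendsto (fun s : ℝ => s ^ 2) (𝓝[>] 0) (𝓝 0) := by
      simpa using ((continuous_pow 2).tendsto (0 : ℝ)).mono_left nhdsWithin_le_nhds
    simpa using (tendsto_mul_coth_nhdsGT_zero.const_mul a).const_add c |>.add hsq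
  have htop : Tendsto g atTop atTop := by
    have hlin : Tendsto (fun s => s + a * coth s) atTop atTop :=
      tendsto_id.atTop_add (tendsto_coth_atTop.const_mul a)
    refine (tendsto_atTop_add_const_left _ c (tendsto_id.atTop_mul_atTop₀ hlin)).congr
      fun s => ?_
    simp only [g, id]
    ring
  obtain ⟨s, hs, hgs⟩ := isPreconnected_Ioi.intermediate_value_Ioi (l₁ := 𝓝[>] 0)
    inf_le_right (le_principal_iff.2 (Ioi_mem_atTop 0))
    hcont hzero htop h
  exact ⟨s, hs, by rw [← hgs]; ring⟩

/-- If `(ξ₀+1)(ξ₁+1) < 1`, then the eigenvalue determinant function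
`f(λ) = ξ₀ξ₁ + (ξ₀+ξ₁)·√λ·coth(√λ) + λ` has a zero at some `λ > 0`. -/
theorem stmt1 (ξ₀ ξ₁ : ℝ) (hprod : (ξ₀ + 1) * (ξ₁ + 1) < 1) :
    ∃ l : ℝ, l > 0 ∧
      ξ₀ * ξ₁ + (ξ₀ + ξ₁) * Real.sqrt l * coth (Real.sqrt l) + l = 0 := by
  obtain ⟨s, hs, hzero⟩ :=
    exists_pos_add_mul_mul_coth_add_sq_eq_zero (ξ₀ + ξ₁) (ξ₀ * ξ₁) (by linarith)
  refine ⟨s ^ 2, by positivity, ?_⟩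
  rwa [Real.sqrt_sq hs.le]
end

section
/- Let n ≥ 2 be a natural number. Define the (n−1)×(n−1) real matrices L and C, indexed by i,j ∈ {1,…,n−1}, by L_{ij} = −2n if i = j, L_{ij} = n if |i−j| = 1, L_{ij} = 0 otherwise, and C_{ij} = min(i,j)/n − ij/n². Then C·L = −Id, i.e. C = (−L)⁻¹. -/
/-!
For a fixed row `p`, the map `m ↦ C(p/n, m/n)` is piecewise linear in `m`, vanishes at `m = 0`
and `m = n`, and its slope per grid step drops by exactly `1/n` at `m = p`. Since it vanishes at
the two boundary nodes, multiplying by the Dirichlet stiffness matrix is the same as taking `n`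
times its second difference, which is `-1` at the kink and `0` elsewhere.
-/

open Finset

def symmTridiagonal {R : Type*} [Zero R] (N : ℕ) (a b : R) : Matrix (Fin N) (Fin N) R :=
  Matrix.of fun i j =>
    if (i : ℕ) = j then a else if (i : ℕ) + 1 = j ∨ (j : ℕ) + 1 = i then b else 0

theorem sum_mul_symmTridiagonal {R : Type*} [NonUnitalNonAssocSemiring R] {N : ℕ} (a b : R)
    (f : ℕ → R) (hf₀ : f 0 = 0) (hf : f (N + 1) = 0) (k : Fin N) :
    ∑ j : Fin N, f (j + 1) * symmTridiagonal N a b j k =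
      f k * b + f (k + 1) * a + f (k + 2) * b := by
  set t : ℕ → R := fun m =>
    f m * ((if m = k then b else 0) + (if m = k + 1 then a else 0) + (if m = k + 2 then b else 0))
  have hentry : ∀ j : Fin N, f (j + 1) * symmTridiagonal N a b j k = t (j + 1) := by
    intro j
    simp only [t, symmTridiagonal, Matrix.of_apply]
    congr 1
    split_ifs <;> first | omega | simp
  have hk := k.isLt
  calc ∑ j : Fin N, f (j + 1) * symmTridiagonal N a b j k
      = ∑ m ∈ range (N + 2), t m := by
        rw [sum_congr rfl fun j _ => hentry j, Fin.sum_univ_eq_sum_range (fun j => t (j + 1)),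
          sum_range_succ, sum_range_succ']
        simp [t, hf₀, hf]
    _ = f k * b + f (k + 1) * a + f (k + 2) * b := by
        simp only [t, mul_add, mul_ite, mul_zero, sum_add_distrib, sum_ite_eq', mem_range]
        rw [if_pos (by omega), if_pos (by omega), if_pos (by omega)]

theorem cast_min_second_difference {R : Type*} [CommRing R] (p k : ℕ) :
    ((min p k : ℕ) : R) - 2 * ((min p (k + 1) : ℕ) : R) + ((min p (k + 2) : ℕ) : R) =
      -if p = k + 1 then 1 else 0 := by
  split_ifs with h
  · subst h
    rw [min_eq_right (by omega), min_eq_left le_rfl, min_eq_left (by omega)]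
    push_cast; ring
  · rcases le_or_gt p k with h' | h'
    · rw [min_eq_left h', min_eq_left (by omega), min_eq_left (by omega)]; ring
    · rw [min_eq_right h'.le, min_eq_right (by omega), min_eq_right (by omega)]; push_cast; ring

/-- The Brownian bridge covariance `min(x, y) - x y` at the grid points `x = p / n`, `y = q / n`. -/
noncomputable def bridgeCov (n p q : ℕ) : ℝ := (min p q : ℕ) / n - (p * q : ℝ) / n ^ 2

theorem bridgeCov_zero_right (n p : ℕ) : bridgeCov n p 0 = 0 := by
  simp [bridgeCov]

theorem bridgeCov_self_right {n p : ℕ} (hp : p ≤ n) : bridgeCov n p n = 0 := by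
  rcases eq_or_ne n 0 with rfl | hn
  · simp [bridgeCov]
  · rw [bridgeCov, min_eq_left hp]
    field_simp
    ring

theorem bridgeCov_second_difference {n : ℕ} (hn : n ≠ 0) (p k : ℕ) :
    n * (bridgeCov n p k - 2 * bridgeCov n p (k + 1) + bridgeCov n p (k + 2)) =
      -if p = k + 1 then 1 else 0 := by
  have hlinear : bridgeCov n p k - 2 * bridgeCov n p (k + 1) + bridgeCov n p (k + 2) =
      (((min p k : ℕ) : ℝ) - 2 * ((min p (k + 1) : ℕ) : ℝ) + ((min p (k + 2) : ℕ) : ℝ)) / n := by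
    simp only [bridgeCov]; push_cast; field_simp; ring
  rw [hlinear, cast_min_second_difference, mul_div_cancel₀ _ (Nat.cast_ne_zero.mpr hn)]

theorem stmt6_general (n : ℕ)
    (L C : Matrix (Fin (n - 1)) (Fin (n - 1)) ℝ)
    (hL : ∀ i j : Fin (n - 1),
      L i j = if (i : ℕ) = (j : ℕ) then -2 * (n : ℝ)
        else if (i : ℕ) + 1 = (j : ℕ) ∨ (j : ℕ) + 1 = (i : ℕ) then (n : ℝ)
        else 0)
    (hC : ∀ i j : Fin (n - 1),
      C i j = ((min ((i : ℕ) + 1) ((j : ℕ) + 1) : ℕ) : ℝ) / n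
        - (((i : ℕ) + 1) * ((j : ℕ) + 1) : ℝ) / (n : ℝ) ^ 2) :
    C * L = -1 := by
  have hL' : L = symmTridiagonal (n - 1) (-2 * n : ℝ) n := Matrix.ext hL
  have hC' : ∀ i j, C i j = bridgeCov n (i + 1) (j + 1) := by
    intro i j; rw [hC, bridgeCov]; push_cast; rfl
  ext i k
  have hi := i.isLt
  have hn : n - 1 + 1 = n := by omega
  calc (C * L) i k
      = ∑ j : Fin (n - 1),
          bridgeCov n (i + 1) (j + 1) * symmTridiagonal (n - 1) (-2 * n : ℝ) n j k := by
        simp only [Matrix.mul_apply, hC', hL']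
    _ = n * (bridgeCov n (i + 1) k - 2 * bridgeCov n (i + 1) (k + 1)
          + bridgeCov n (i + 1) (k + 2)) := by
        rw [sum_mul_symmTridiagonal _ _ _ (bridgeCov_zero_right n _)
          (by rw [hn]; exact bridgeCov_self_right (by omega))]
        ring
    _ = (-1 : Matrix (Fin (n - 1)) (Fin (n - 1)) ℝ) i k := by
        rw [bridgeCov_second_difference (by omega)]
        simp [Matrix.one_apply, Fin.ext_iff]

/-- The finite element stiffness matrix `L` of `∂ₓ²` with homogeneous Dirichlet boundary
conditions on the uniform grid with spacing `1/n`, and the matrix `C` of values of the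
Brownian bridge covariance `min(x,y) − xy` at the grid points, satisfy `C·L = −Id`,
i.e. `C = (−L)⁻¹`.  (Rows and columns are indexed by `i, j ∈ {1, …, n−1}`, realised
here as `Fin (n-1)` via `i ↦ i+1`.) -/
theorem stmt6 (n : ℕ) (hn : 2 ≤ n)
    (L C : Matrix (Fin (n - 1)) (Fin (n - 1)) ℝ)
    (hL : ∀ i j : Fin (n - 1),
      L i j = if (i : ℕ) = (j : ℕ) then -2 * (n : ℝ)
        else if (i : ℕ) + 1 = (j : ℕ) ∨ (j : ℕ) + 1 = (i : ℕ) then (n : ℝ)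
        else 0)
    (hC : ∀ i j : Fin (n - 1),
      C i j = ((min ((i : ℕ) + 1) ((j : ℕ) + 1) : ℕ) : ℝ) / n
        - (((i : ℕ) + 1) * ((j : ℕ) + 1) : ℝ) / (n : ℝ) ^ 2) :
    C * L = -1 :=
  stmt6_general n L C hL hC
end

section
/- Let n ≥ 2 be a natural number and let α₀, β₀, α₁, β₁ ∈ ℝ with β₀ ≠ 0, β₁ ≠ 0 and D := α₀α₁ + α₀β₁ + β₀α₁ ≠ 0. Define the (n+1)×(n+1) real matrices L and C, indexed by i,j ∈ {0,1,…,n}, by: L_{ij} = n if |i−j| = 1; L_{ii} = −2n for 0 < i < n; L_{00} = −n − α₀/β₀; L_{nn} = −n − α₁/β₁; L_{ij} = 0 otherwise; and C_{ij} = C(i/n, j/n) where C(x,y) = (β₀β₁ + α₀β₁xy + β₀α₁(1−x)(1−y))/D + min(x,y) − xy. Then C·L = −Id, i.e. C = (−L)⁻¹. -/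
/-!
Fix a grid point `x = i/n`. As a function of `y`, `C(x, y)` is affine plus the kink `min x y`.
Multiplying a row of grid values by `L` takes `n` times second differences at the interior nodes;
these vanish on affine functions and give `-δᵢⱼ` on the kink. The two boundary rows compute, up to
the factors `-1/β₀` and `-1/β₁`, the Robin residues `α₀u(0) - β₀u'(0)` and `α₁u(1) + β₁u'(1)` of the
piecewise linear grid function, and the constants in `C` are exactly those for which `C(x, ·)`
satisfies both Robin conditions, so nothing but `-δᵢⱼ` survives.
-/

open Finset

section

variable (n : ℕ) (a₀ a₁ : ℝ)

-- The stiffness matrix with `a₀ = α₀/β₀` and `a₁ = α₁/β₁`.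
def robinStiffness (k j : ℕ) : ℝ :=
  if k + 1 = j ∨ j + 1 = k then (n : ℝ)
  else if k = j then
    (if k = 0 then -(n : ℝ) - a₀ else if k = n then -(n : ℝ) - a₁ else -2 * (n : ℝ))
  else 0

def robinDiff (v : ℕ → ℝ) (j : ℕ) : ℝ :=
  if j = 0 then n * (v 1 - v 0) - a₀ * v 0
  else if j = n then n * (v (n - 1) - v n) - a₁ * v n
  else n * (v (j - 1) - 2 * v j + v (j + 1))

variable {n a₀ a₁}

lemma robinStiffness_eq_zero {k j : ℕ} (hk : k ∉ ({j - 1, j, j + 1} : Finset ℕ)) :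
    robinStiffness n a₀ a₁ k j = 0 := by
  simp only [mem_insert, mem_singleton, not_or] at hk
  rw [robinStiffness, if_neg (by omega), if_neg hk.2.1]

lemma robinStiffness_succ_left (k : ℕ) : robinStiffness n a₀ a₁ k (k + 1) = n := by
  simp [robinStiffness]

lemma robinStiffness_succ_right (j : ℕ) : robinStiffness n a₀ a₁ (j + 1) j = n := by
  simp [robinStiffness]

lemma robinStiffness_zero_zero : robinStiffness n a₀ a₁ 0 0 = -n - a₀ := by
  simp [robinStiffness]

lemma robinStiffness_self_of_ne_zero {k : ℕ} (hk : k ≠ 0) :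
    robinStiffness n a₀ a₁ k k = if k = n then -n - a₁ else -2 * n := by
  simp [robinStiffness, hk]

lemma sum_mul_robinStiffness (hn : 1 ≤ n) {j : ℕ} (hj : j ≤ n) (v : ℕ → ℝ) :
    ∑ k ∈ range (n + 1), v k * robinStiffness n a₀ a₁ k j = robinDiff n a₀ a₁ v j := by
  rw [← sum_subset (inter_subset_right (s₁ := {j - 1, j, j + 1})) fun k hk hks => by
    rw [robinStiffness_eq_zero fun h => hks (mem_inter.2 ⟨h, hk⟩), mul_zero]]
  unfold robinDiff
  obtain _ | m := j
  · have hsupp : ({0 - 1, 0, 0 + 1} : Finset ℕ) ∩ range (n + 1) = {0, 1} := by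
      ext k
      simp only [mem_inter, mem_insert, mem_singleton, mem_range]
      omega
    have h10 : robinStiffness n a₀ a₁ 1 0 = n := robinStiffness_succ_right 0
    rw [if_pos rfl, hsupp, sum_pair zero_ne_one, robinStiffness_zero_zero, h10]
    ring
  rw [if_neg m.succ_ne_zero]
  split_ifs with hm
  · subst hm
    have hsupp : ({m + 1 - 1, m + 1, m + 1 + 1} : Finset ℕ) ∩ range (m + 1 + 1) = {m, m + 1} := by
      ext k
      simp only [mem_inter, mem_insert, mem_singleton, mem_range]
      omega
    rw [hsupp, sum_pair (by omega), robinStiffness_succ_left,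
      robinStiffness_self_of_ne_zero m.succ_ne_zero, if_pos rfl, Nat.add_sub_cancel]
    ring
  · have hsupp :
        ({m + 1 - 1, m + 1, m + 1 + 1} : Finset ℕ) ∩ range (n + 1) = {m, m + 1, m + 2} := by
      ext k
      simp only [mem_inter, mem_insert, mem_singleton, mem_range]
      omega
    rw [hsupp, sum_insert (by simp), sum_pair (by omega), robinStiffness_succ_left,
      robinStiffness_self_of_ne_zero m.succ_ne_zero, if_neg hm, robinStiffness_succ_right,
      Nat.add_sub_cancel]
    ring

lemma robinDiff_add (v w : ℕ → ℝ) (j : ℕ) :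
    robinDiff n a₀ a₁ (v + w) j = robinDiff n a₀ a₁ v j + robinDiff n a₀ a₁ w j := by
  unfold robinDiff
  split_ifs <;> simp only [Pi.add_apply] <;> ring

lemma robinDiff_affine (hn : 1 ≤ n) (p q : ℝ) (j : ℕ) :
    robinDiff n a₀ a₁ (fun k => p + q * (k / n)) j =
      if j = 0 then q - a₀ * p else if j = n then -q - a₁ * (p + q) else 0 := by
  have hn' : (n : ℝ) ≠ 0 := by positivity
  unfold robinDiff
  dsimp only
  split_ifs with h0 hj
  · push_cast
    field_simp
    ring
  · subst hj
    rw [Nat.cast_sub hn, Nat.cast_one]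
    field_simp
    ring
  · simp only [Nat.cast_sub (Nat.one_le_iff_ne_zero.2 h0), Nat.cast_add, Nat.cast_one]
    field_simp
    ring

lemma cast_min_add_one (i m : ℕ) :
    ((min i (m + 1) : ℕ) : ℝ) = (min i m : ℕ) + if m < i then 1 else 0 := by
  split_ifs <;> norm_cast <;> omega

lemma robinDiff_min (hn : 1 ≤ n) {i : ℕ} (hi : i ≤ n) (j : ℕ) :
    robinDiff n a₀ a₁ (fun k => min ((i : ℝ) / n) (k / n)) j =
      (if j = 0 then 1 else if j = n then -a₁ * (i / n) else 0) - if i = j then 1 else 0 := by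
  have hn' : (0 : ℝ) < n := by positivity
  simp only [min_div_div_right hn'.le, ← Nat.cast_min]
  unfold robinDiff
  obtain _ | m := j
  · simp only [zero_add, cast_min_add_one, Nat.min_zero]
    split_ifs <;> first | omega | (field_simp; ring)
  simp only [m.succ_ne_zero, ↓reduceIte]
  by_cases hm : m + 1 = n
  · subst hm
    have hlast := cast_min_add_one i m
    rw [min_eq_left hi] at hlast
    rw [if_pos rfl, Nat.add_sub_cancel, min_eq_left hi, hlast]
    split_ifs <;> first | omega | (field_simp; ring)
  · rw [if_neg hm, Nat.add_sub_cancel]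
    simp only [cast_min_add_one]
    split_ifs <;> first | omega | (field_simp; ring)

noncomputable def robinCov (α₀ β₀ α₁ β₁ x y : ℝ) : ℝ :=
  (β₀ * β₁ + α₀ * β₁ * (x * y) + β₀ * α₁ * ((1 - x) * (1 - y))) / (α₀ * α₁ + α₀ * β₁ + β₀ * α₁)
    + min x y - x * y

theorem sum_robinCov_mul_robinStiffness {α₀ β₀ α₁ β₁ : ℝ} (hβ₀ : β₀ ≠ 0) (hβ₁ : β₁ ≠ 0)
    (hD : α₀ * α₁ + α₀ * β₁ + β₀ * α₁ ≠ 0) (hn : 1 ≤ n) {i j : ℕ} (hi : i ≤ n) (hj : j ≤ n) :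
    ∑ k ∈ range (n + 1),
        robinCov α₀ β₀ α₁ β₁ (i / n) (k / n) * robinStiffness n (α₀ / β₀) (α₁ / β₁) k j =
      if i = j then -1 else 0 := by
  set D := α₀ * α₁ + α₀ * β₁ + β₀ * α₁
  set x : ℝ := i / n
  set p := (β₀ * β₁ + β₀ * α₁ * (1 - x)) / D
  set q := (α₀ * β₁ * x - β₀ * α₁ * (1 - x)) / D - x
  have hsplit : (fun k : ℕ => robinCov α₀ β₀ α₁ β₁ x (k / n)) =
      (fun k : ℕ => p + q * (k / n)) + fun k : ℕ => min x (k / n) := by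
    funext k
    simp only [robinCov, Pi.add_apply, p, q]
    ring
  -- Robin conditions for `C(x, ·)`: its slope is `q + 1` left of the kink and `q` right of it.
  have hleft : q + 1 - α₀ / β₀ * p = 0 := by
    simp only [p, q]
    field_simp
    ring
  have hright : -q - α₁ / β₁ * (p + q) - α₁ / β₁ * x = 0 := by
    simp only [p, q]
    field_simp
    ring
  rw [sum_mul_robinStiffness hn hj, hsplit, robinDiff_add, robinDiff_affine hn, robinDiff_min hn hi]
  split_ifs <;> linarith

end

/-- The finite element stiffness matrix `L` of `∂ₓ²` with Robin boundary conditions on the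
uniform grid with spacing `1/n`, and the matrix `C` of values of the stationary covariance
function `C(x,y) = (β₀β₁ + α₀β₁xy + β₀α₁(1−x)(1−y))/D + min(x,y) − xy` at the grid points,
satisfy `C·L = −Id`, i.e. `C = (−L)⁻¹`.  (Rows and columns are indexed by
`i, j ∈ {0, 1, …, n}`, realised as `Fin (n+1)`.) -/
theorem stmt7 (n : ℕ) (hn : 2 ≤ n) (α₀ β₀ α₁ β₁ D : ℝ)
    (hβ₀ : β₀ ≠ 0) (hβ₁ : β₁ ≠ 0)
    (hD : D = α₀ * α₁ + α₀ * β₁ + β₀ * α₁) (hD0 : D ≠ 0)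
    (L C : Matrix (Fin (n + 1)) (Fin (n + 1)) ℝ)
    (hL : ∀ i j : Fin (n + 1),
      L i j = if (i : ℕ) + 1 = (j : ℕ) ∨ (j : ℕ) + 1 = (i : ℕ) then (n : ℝ)
        else if (i : ℕ) = (j : ℕ) then
          (if (i : ℕ) = 0 then -(n : ℝ) - α₀ / β₀
            else if (i : ℕ) = n then -(n : ℝ) - α₁ / β₁
            else -2 * (n : ℝ))
        else 0)
    (hC : ∀ i j : Fin (n + 1),
      C i j = (β₀ * β₁ + α₀ * β₁ * (((i : ℕ) : ℝ) / n * (((j : ℕ) : ℝ) / n))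
            + β₀ * α₁ * ((1 - ((i : ℕ) : ℝ) / n) * (1 - ((j : ℕ) : ℝ) / n))) / D
          + min (((i : ℕ) : ℝ) / n) (((j : ℕ) : ℝ) / n)
          - ((i : ℕ) : ℝ) / n * (((j : ℕ) : ℝ) / n)) :
    C * L = -1 := by
  subst hD
  ext i j
  have hsum : ∑ k, C i k * L k j = ∑ k ∈ range (n + 1),
      robinCov α₀ β₀ α₁ β₁ (i / n) (k / n) * robinStiffness n (α₀ / β₀) (α₁ / β₁) k j := by
    refine (sum_congr rfl fun k _ => ?_).trans (Fin.sum_univ_eq_sum_range _ _)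
    rw [hC, hL]
    rfl
  rw [Matrix.mul_apply, hsum,
    sum_robinCov_mul_robinStiffness hβ₀ hβ₁ hD0 (by omega) (Fin.is_le i) (Fin.is_le j)]
  simp [Matrix.one_apply, Fin.ext_iff, apply_ite]
end

section
/- Let (Ω, 𝓕, μ) be a measure space and let f₁, f₂ : Ω → ℝ be nonnegative integrable functions with Z₁ = ∫ f₁ dμ > 0 and Z₂ = ∫ f₂ dμ > 0. Then ∫ |f₁/Z₁ − f₂/Z₂| dμ ≤ (2 / max(Z₁, Z₂)) · ∫ |f₁ − f₂| dμ. -/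
/-!
Assume `Z₁ ≤ Z₂`. Pointwise,
`f₁/Z₁ - f₂/Z₂ = (f₁ - f₂)/Z₂ + f₁ (1/Z₁ - 1/Z₂)`, and the second term is nonnegative because
`f₁ ≥ 0`. Integrating, the first term contributes `‖f₁ - f₂‖₁ / Z₂` and the second
`Z₁ (1/Z₁ - 1/Z₂) = (Z₂ - Z₁)/Z₂ ≤ ‖f₁ - f₂‖₁ / Z₂`.
-/

open MeasureTheory

lemma abs_div_sub_div_le_of_le {a b Z₁ Z₂ : ℝ} (ha : 0 ≤ a) (hZ₁ : 0 < Z₁) (hle : Z₁ ≤ Z₂) :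
    |a / Z₁ - b / Z₂| ≤ |a - b| / Z₂ + a * (1 / Z₁ - 1 / Z₂) := by
  have hZ₂ : 0 < Z₂ := hZ₁.trans_le hle
  have hsplit : a / Z₁ - b / Z₂ = (a - b) / Z₂ + a * (1 / Z₁ - 1 / Z₂) := by ring
  have hcorr : 0 ≤ a * (1 / Z₁ - 1 / Z₂) :=
    mul_nonneg ha (sub_nonneg.2 (one_div_le_one_div_of_le hZ₁ hle))
  calc |a / Z₁ - b / Z₂|
      ≤ |(a - b) / Z₂| + |a * (1 / Z₁ - 1 / Z₂)| := hsplit ▸ abs_add_le _ _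
    _ = |a - b| / Z₂ + a * (1 / Z₁ - 1 / Z₂) := by
      rw [abs_div, abs_of_pos hZ₂, abs_of_nonneg hcorr]

section

variable {Ω : Type*} [MeasurableSpace Ω] {μ : Measure Ω} {f₁ f₂ : Ω → ℝ}

lemma integral_sub_integral_le_integral_abs_sub (hf₁ : Integrable f₁ μ)
    (hf₂ : Integrable f₂ μ) :
    ∫ ω, f₂ ω ∂μ - ∫ ω, f₁ ω ∂μ ≤ ∫ ω, |f₁ ω - f₂ ω| ∂μ := by
  rw [← integral_sub hf₂ hf₁]
  exact integral_mono (hf₂.sub hf₁) (hf₁.sub hf₂).abs fun ω =>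
    abs_sub_comm (f₁ ω) _ ▸ le_abs_self _

lemma integral_abs_div_sub_div_le_of_integral_le (hf₁ : Integrable f₁ μ) (hf₂ : Integrable f₂ μ)
    (hf₁0 : 0 ≤ᵐ[μ] f₁) (hZ₁ : 0 < ∫ ω, f₁ ω ∂μ) (hle : ∫ ω, f₁ ω ∂μ ≤ ∫ ω, f₂ ω ∂μ) :
    ∫ ω, |f₁ ω / ∫ ω, f₁ ω ∂μ - f₂ ω / ∫ ω, f₂ ω ∂μ| ∂μ
      ≤ 2 / (∫ ω, f₂ ω ∂μ) * ∫ ω, |f₁ ω - f₂ ω| ∂μ := by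
  set Z₁ := ∫ ω, f₁ ω ∂μ
  set Z₂ := ∫ ω, f₂ ω ∂μ
  set D := ∫ ω, |f₁ ω - f₂ ω| ∂μ
  have hD : Integrable (fun ω => |f₁ ω - f₂ ω| / Z₂) μ := (hf₁.sub hf₂).abs.div_const _
  have hcorr : Integrable (fun ω => f₁ ω * (1 / Z₁ - 1 / Z₂)) μ := hf₁.mul_const _
  have hpointwise : ∫ ω, |f₁ ω / Z₁ - f₂ ω / Z₂| ∂μ ≤ D / Z₂ + Z₁ * (1 / Z₁ - 1 / Z₂) := by
    rw [← integral_div, ← integral_mul_const, ← integral_add hD hcorr]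
    refine integral_mono_ae ((hf₁.div_const _).sub (hf₂.div_const _)).abs (hD.add hcorr) ?_
    filter_upwards [hf₁0] with ω hω using abs_div_sub_div_le_of_le hω hZ₁ hle
  have hZ₂ : 0 < Z₂ := hZ₁.trans_le hle
  have hmass : Z₁ * (1 / Z₁ - 1 / Z₂) = (Z₂ - Z₁) / Z₂ := by field_simp
  calc _ ≤ D / Z₂ + (Z₂ - Z₁) / Z₂ := hmass ▸ hpointwise
    _ ≤ D / Z₂ + D / Z₂ := by
      gcongr
      exact integral_sub_integral_le_integral_abs_sub hf₁ hf₂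
    _ = 2 / Z₂ * D := by ring

end

/-- The L¹-distance between two normalised densities is bounded in terms of the
L¹-distance between the unnormalised densities:
`∫ |f₁/Z₁ − f₂/Z₂| dμ ≤ (2 / max(Z₁,Z₂)) ∫ |f₁ − f₂| dμ`. -/
theorem stmt9 {Ω : Type*} [MeasurableSpace Ω] (μ : Measure Ω)
    (f₁ f₂ : Ω → ℝ)
    (hf₁ : Integrable f₁ μ) (hf₂ : Integrable f₂ μ)
    (hf₁0 : ∀ ω, 0 ≤ f₁ ω) (hf₂0 : ∀ ω, 0 ≤ f₂ ω)
    (Z₁ Z₂ : ℝ) (hZ₁ : Z₁ = ∫ ω, f₁ ω ∂μ) (hZ₂ : Z₂ = ∫ ω, f₂ ω ∂μ)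
    (hZ₁0 : 0 < Z₁) (hZ₂0 : 0 < Z₂) :
    ∫ ω, |f₁ ω / Z₁ - f₂ ω / Z₂| ∂μ
      ≤ 2 / max Z₁ Z₂ * ∫ ω, |f₁ ω - f₂ ω| ∂μ := by
  subst hZ₁ hZ₂
  rcases le_total (∫ ω, f₁ ω ∂μ) (∫ ω, f₂ ω ∂μ) with hle | hle
  · rw [max_eq_right hle]
    exact integral_abs_div_sub_div_le_of_integral_le hf₁ hf₂ (.of_forall hf₁0) hZ₁0 hle
  · rw [max_eq_left hle]
    simpa only [abs_sub_comm] using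
      integral_abs_div_sub_div_le_of_integral_le hf₂ hf₁ (.of_forall hf₂0) hZ₂0 hle
end

section
/- Let (Ω, 𝓕) and (E, 𝓔) be measurable spaces, let Π : Ω → E be measurable, and let μ and ν be probability measures on Ω with μ absolutely continuous with respect to ν. Then the pushforward μ∘Π⁻¹ is absolutely continuous with respect to ν∘Π⁻¹, and ν-almost everywhere (d(μ∘Π⁻¹)/d(ν∘Π⁻¹)) ∘ Π = E_ν( dμ/dν | σ(Π) ), the conditional expectation under ν of the Radon–Nikodym density dμ/dν given the σ-algebra generated by Π. -/
open MeasureTheory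

/-- If `μ ≪ ν` are probability measures on `Ω` and `proj : Ω → E` is measurable, then the
pushforward `μ∘proj⁻¹` is absolutely continuous with respect to `ν∘proj⁻¹`, and
`ν`-almost everywhere the composition of the Radon–Nikodym density of the pushforwards
with `proj` equals the conditional expectation under `ν` of `dμ/dν` given the σ-algebra
generated by `proj`. -/
theorem stmt10 {Ω E : Type*} [MeasurableSpace Ω] [mE : MeasurableSpace E]
    (proj : Ω → E) (hproj : Measurable proj)
    (μ ν : Measure Ω) [IsProbabilityMeasure μ] [IsProbabilityMeasure ν]
    (hμν : μ ≪ ν) :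
    μ.map proj ≪ ν.map proj
    ∧ (fun ω => ((μ.map proj).rnDeriv (ν.map proj) (proj ω)).toReal)
        =ᵐ[ν] ν[fun ω => (μ.rnDeriv ν ω).toReal | MeasurableSpace.comap proj mE] :=
  ⟨hμν.map hproj, toReal_rnDeriv_map hμν hproj⟩
end

section
/- Let (E, 𝓔) and (F, 𝓕) be measurable spaces, let κ be a Markov kernel from E to F, and let Π : F → E be measurable such that κ(x)({y ∈ F : Π(y) = x}) = 1 for every x ∈ E. Let μ and ν be probability measures on E with μ ≪ ν and density ψ = dμ/dν. Let μ̂ = ∫_E κ(x) dμ(x) and ν̂ = ∫_E κ(x) dν(x) be the corresponding mixture measures on F. Then μ̂ ≪ ν̂ and dμ̂/dν̂ = ψ∘Π holds ν̂-almost everywhere. -/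
/-!
Since `κ x` lives on the fibre of `proj` over `x`, a density `g` on the base can be moved inside
the kernel: `g x * κ x A = ∫⁻ y in A, g (proj y) ∂κ x`. Integrating over `ν` shows that the mixture
of `ν.withDensity g` is the mixture of `ν` with density `g ∘ proj`; applied to `g = dμ/dν` this
identifies `μ̂` as `ν̂.withDensity (dμ/dν ∘ proj)`.
-/

open MeasureTheory ProbabilityTheory

open scoped ENNReal

section

variable {E F : Type*} [MeasurableSpace F]

/-- The fibre `{y | proj y = x}` need not be measurable, so concentration on it is transferred
through the measurable set `{y | f (proj y) = f x}`. -/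
theorem ae_comp_eq_of_measure_fiber_eq_one {β : Type*} [MeasurableSpace β]
    [MeasurableSingletonClass β] {P : Measure F} [IsProbabilityMeasure P] {proj : F → E}
    {f : E → β} (hf : Measurable (f ∘ proj)) {x : E} (hx : P {y | proj y = x} = 1) :
    ∀ᵐ y ∂P, f (proj y) = f x := by
  have hmeas : MeasurableSet {y | f (proj y) = f x} := hf (measurableSet_singleton (f x))
  rw [ae_iff_measure_eq hmeas.nullMeasurableSet, measure_univ]
  exact le_antisymm prob_le_one (hx ▸ measure_mono fun y hy => congrArg f hy)

theorem lintegral_indicator_comp_eq_mul_of_measure_fiber_eq_one {P : Measure F}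
    [IsProbabilityMeasure P] {proj : F → E} {g : E → ℝ≥0∞} (hg : Measurable (g ∘ proj))
    {x : E} (hx : P {y | proj y = x} = 1) {A : Set F} (hA : MeasurableSet A) :
    ∫⁻ y, A.indicator (g ∘ proj) y ∂P = g x * P A := by
  have hconst : ∀ᵐ y ∂P, y ∈ A → (g ∘ proj) y = g x := by
    filter_upwards [ae_comp_eq_of_measure_fiber_eq_one hg hx] with y hy _ using hy
  rw [lintegral_indicator hA, setLIntegral_congr_fun_ae hA hconst, setLIntegral_const]

theorem Measure.bind_withDensity_eq_withDensity_comp [MeasurableSpace E] (ν : Measure E)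
    (κ : Kernel E F) [IsMarkovKernel κ] {proj : F → E} (hproj : Measurable proj)
    (hκ : ∀ x, κ x {y | proj y = x} = 1) {g : E → ℝ≥0∞} (hg : Measurable g) :
    (ν.withDensity g).bind κ = (ν.bind κ).withDensity (g ∘ proj) := by
  have hgp : Measurable (g ∘ proj) := hg.comp hproj
  ext A hA
  calc (ν.withDensity g).bind κ A
      = ∫⁻ x, κ x A ∂ν.withDensity g := Measure.bind_apply hA κ.measurable.aemeasurable
    _ = ∫⁻ x, g x * κ x A ∂ν := lintegral_withDensity_eq_lintegral_mul _ hg (κ.measurable_coe hA)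
    _ = ∫⁻ x, ∫⁻ y, A.indicator (g ∘ proj) y ∂κ x ∂ν := by
      simp_rw [lintegral_indicator_comp_eq_mul_of_measure_fiber_eq_one hgp (hκ _) hA]
    _ = ∫⁻ y, A.indicator (g ∘ proj) y ∂ν.bind κ :=
      (Measure.lintegral_bind κ.measurable.aemeasurable (hgp.indicator hA).aemeasurable).symm
    _ = (ν.bind κ).withDensity (g ∘ proj) A := by rw [lintegral_indicator hA, withDensity_apply _ hA]

end

/-- Let `κ` be a Markov kernel from `E` to `F` and `proj : F → E` a measurable map such
that `κ x` is concentrated on the fibre `{y : proj y = x}` for every `x`.  If `μ ≪ ν`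
are probability measures on `E`, then the mixture measures `μ̂ = ∫ κ(x) dμ(x)` and
`ν̂ = ∫ κ(x) dν(x)` satisfy `μ̂ ≪ ν̂` and `dμ̂/dν̂ = (dμ/dν)∘proj` holds
`ν̂`-almost everywhere. -/
theorem stmt16 {E F : Type*} [MeasurableSpace E] [MeasurableSpace F]
    (κ : Kernel E F) [IsMarkovKernel κ]
    (proj : F → E) (hproj : Measurable proj)
    (hκ : ∀ x : E, κ x {y : F | proj y = x} = 1)
    (μ ν : Measure E) [IsProbabilityMeasure μ] [IsProbabilityMeasure ν]
    (hμν : μ ≪ ν) :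
    μ.bind κ ≪ ν.bind κ
    ∧ (μ.bind κ).rnDeriv (ν.bind κ)
        =ᵐ[ν.bind κ] fun y => μ.rnDeriv ν (proj y) := by
  have hψ : Measurable (μ.rnDeriv ν) := Measure.measurable_rnDeriv μ ν
  have hmix : μ.bind κ = (ν.bind κ).withDensity (μ.rnDeriv ν ∘ proj) := by
    conv_lhs => rw [← Measure.withDensity_rnDeriv_eq μ ν hμν]
    exact Measure.bind_withDensity_eq_withDensity_comp ν κ hproj hκ hψ
  rw [hmix]
  exact ⟨withDensity_absolutelyContinuous _ _,
    Measure.rnDeriv_withDensity (ν.bind κ) (hψ.comp hproj)⟩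
end
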